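/- arXiv:math-ph/0312055 — 2 statements merged into one kernel-verified Lean document; each statement's English description precedes it below -/
import Mathlib

section
/- Let α > 0, β ∈ ℝ, ε_β = −4·exp(−2(2πβ + γ)), and for each a > 0 let κ_a ∈ (α/2, ∞) be the unique solution of š_β(κ) = φ_a(κ). If √(−ε_β) > α/2 then κ_a → √(−ε_β) as a → ∞; if √(−ε_β) ≤ α/2 then κ_a → α/2 as a → ∞. -/
open Real MeasureTheory Set Filter Topology

noncomputable def sBeta (β κ : ℝ) : ℝ :=
  β + (1 / (2 * π)) * (Real.log (κ / 2) + Real.eulerMascheroniConstant)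

noncomputable def phiA (α a κ : ℝ) : ℝ :=
  (α / (4 * π)) * ∫ p : ℝ,
    Real.exp (-2 * a * Real.sqrt (p ^ 2 + κ ^ 2)) /
      ((2 * Real.sqrt (p ^ 2 + κ ^ 2) - α) * Real.sqrt (p ^ 2 + κ ^ 2))

noncomputable def phi0 (α κ : ℝ) : ℝ :=
  (α / (4 * π)) * ∫ p : ℝ,
    1 / ((2 * Real.sqrt (p ^ 2 + κ ^ 2) - α) * Real.sqrt (p ^ 2 + κ ^ 2))

noncomputable def besselK0 (x : ℝ) : ℝ := ∫ t in Set.Ioi (0:ℝ), Real.exp (-x * Real.cosh t)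

noncomputable def psiA (α a κ : ℝ) : ℝ :=
  (α / π) * ∫ p in Set.Ioi (0:ℝ),
    p * Real.exp (-2 * a * Real.sqrt (p ^ 2 + κ ^ 2)) /
      ((2 * Real.sqrt (p ^ 2 + κ ^ 2) - α) * Real.sqrt (p ^ 2 + κ ^ 2))

noncomputable def psiC (α a κ : ℝ) : ℝ :=
  (α / π) * ∫ t in Set.Ioi κ, Real.exp (-2 * t * a) / (2 * t - α)

noncomputable def F (α a κ p : ℝ) : ℝ :=
  Real.exp (-2 * a * Real.sqrt (p ^ 2 + κ ^ 2)) /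
    ((2 * Real.sqrt (p ^ 2 + κ ^ 2) - α) * Real.sqrt (p ^ 2 + κ ^ 2))

lemma abs_le_sqrt' (p κ : ℝ) : |p| ≤ Real.sqrt (p ^ 2 + κ ^ 2) := by
  calc |p| = Real.sqrt (p ^ 2) := (Real.sqrt_sq_eq_abs p).symm
    _ ≤ _ := Real.sqrt_le_sqrt (by nlinarith [sq_nonneg κ])

lemma k_le_sqrt' (p κ : ℝ) (hκ : 0 ≤ κ) : κ ≤ Real.sqrt (p ^ 2 + κ ^ 2) := by
  calc κ = Real.sqrt (κ ^ 2) := (Real.sqrt_sq hκ).symm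
    _ ≤ _ := Real.sqrt_le_sqrt (by nlinarith [sq_nonneg p])

lemma den_pos {α κ : ℝ} (hα : 0 < α) (hκ : α / 2 < κ) (p : ℝ) :
    0 < (2 * Real.sqrt (p ^ 2 + κ ^ 2) - α) * Real.sqrt (p ^ 2 + κ ^ 2) := by
  have hκ0 : 0 < κ := lt_trans (by positivity) hκ
  have h1 := k_le_sqrt' p κ hκ0.le
  have h2 : 0 < Real.sqrt (p ^ 2 + κ ^ 2) := lt_of_lt_of_le hκ0 h1
  nlinarith

lemma F_nonneg {α a κ : ℝ} (hα : 0 < α) (hκ : α / 2 < κ) (p : ℝ) : 0 ≤ F α a κ p :=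
  div_nonneg (Real.exp_pos _).le (den_pos hα hκ p).le

lemma F_cont {α a κ : ℝ} (hα : 0 < α) (hκ : α / 2 < κ) : Continuous (F α a κ) := by
  have hcs : Continuous fun p : ℝ => Real.sqrt (p ^ 2 + κ ^ 2) :=
    Real.continuous_sqrt.comp (by continuity)
  exact Continuous.div (Real.continuous_exp.comp (continuous_const.mul hcs))
    (((continuous_const.mul hcs).sub continuous_const).mul hcs)
    (fun p => (den_pos hα hκ p).ne')

lemma integrable_exp_neg_mul_abs (c : ℝ) (hc : 0 < c) :
    Integrable (fun p : ℝ => Real.exp (-c * |p|)) := by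
  have h1 : IntegrableOn (fun p : ℝ => Real.exp (-c * |p|)) (Ioi 0) :=
    (exp_neg_integrableOn_Ioi 0 hc).congr_fun
      (fun x hx => by rw [abs_of_pos hx]) measurableSet_Ioi
  rw [← integrableOn_univ, ← @Iio_union_Ici _ _ (0 : ℝ), integrableOn_union,
    integrableOn_Ici_iff_integrableOn_Ioi]
  refine ⟨?_, h1⟩
  rw [← (Measure.measurePreserving_neg (volume : Measure ℝ)).integrableOn_comp_preimage
      (Homeomorph.neg ℝ).measurableEmbedding]
  simp only [Function.comp_def, abs_neg, neg_preimage, neg_Iio, neg_zero]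
  exact h1

lemma F_le {α a κ : ℝ} (hα : 0 < α) (hκ : α / 2 < κ) (ha : 0 ≤ a) (p : ℝ) :
    F α a κ p ≤ Real.exp (-(2 * a) * |p|) * (1 / ((2 * κ - α) * κ)) := by
  have hκ0 : 0 < κ := lt_trans (by positivity) hκ
  have h1 := k_le_sqrt' p κ hκ0.le
  have h2 := abs_le_sqrt' p κ
  have hd0 : 0 < (2 * κ - α) * κ := by nlinarith
  rw [mul_one_div]
  refine div_le_div₀ (Real.exp_pos _).le (Real.exp_le_exp.2 ?_) hd0 ?_
  · nlinarith [mul_nonneg ha (sub_nonneg.2 h2)]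
  · nlinarith [mul_nonneg (sub_nonneg.2 h1) (sub_nonneg.2 h1), h1, hκ, hα]

lemma integrable_F {α a κ : ℝ} (hα : 0 < α) (hκ : α / 2 < κ) (ha : 0 < a) :
    Integrable (F α a κ) := by
  refine ((integrable_exp_neg_mul_abs (2 * a) (by positivity)).mul_const
    (1 / ((2 * κ - α) * κ))).mono' (F_cont hα hκ).aestronglyMeasurable ?_
  filter_upwards with p
  rw [Real.norm_eq_abs, abs_of_nonneg (F_nonneg hα hκ p)]
  exact F_le hα hκ ha.le p

lemma phiA_eq (α a κ : ℝ) : phiA α a κ = (α / (4 * π)) * ∫ p : ℝ, F α a κ p := rfl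

lemma phiA_nonneg {α a κ : ℝ} (hα : 0 < α) (hκ : α / 2 < κ) : 0 ≤ phiA α a κ := by
  rw [phiA_eq]
  exact mul_nonneg (by positivity) (integral_nonneg (fun p => F_nonneg hα hκ p))

lemma F_anti {α a κ₀ κ₁ : ℝ} (hα : 0 < α) (ha : 0 ≤ a) (hκ0 : α / 2 < κ₀)
    (hk : κ₀ ≤ κ₁) (p : ℝ) : F α a κ₁ p ≤ F α a κ₀ p := by
  have hκ00 : 0 < κ₀ := lt_trans (by positivity) hκ0
  have hss : Real.sqrt (p ^ 2 + κ₀ ^ 2) ≤ Real.sqrt (p ^ 2 + κ₁ ^ 2) :=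
    Real.sqrt_le_sqrt (by nlinarith)
  have h1 := k_le_sqrt' p κ₀ hκ00.le
  have hd0 := den_pos hα hκ0 p
  refine div_le_div₀ (Real.exp_pos _).le (Real.exp_le_exp.2 ?_) hd0 ?_
  · nlinarith [mul_nonneg ha (sub_nonneg.2 hss)]
  · nlinarith [mul_nonneg (sub_nonneg.2 hss) (sub_nonneg.2 hss), hss, h1, hκ0, hα]

lemma phiA_anti {α a κ₀ κ₁ : ℝ} (hα : 0 < α) (ha : 0 < a) (hκ0 : α / 2 < κ₀)
    (hk : κ₀ ≤ κ₁) : phiA α a κ₁ ≤ phiA α a κ₀ := by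
  rw [phiA_eq, phiA_eq]
  refine mul_le_mul_of_nonneg_left ?_ (by positivity)
  exact integral_mono_of_nonneg (Eventually.of_forall (F_nonneg hα (lt_of_lt_of_le hκ0 hk)))
    (integrable_F hα hκ0 ha) (Eventually.of_forall (F_anti hα ha.le hκ0 hk))

lemma F_le2 {α a κ : ℝ} (hα : 0 < α) (hκ : α / 2 < κ) (ha : 1 ≤ a) (p : ℝ) :
    F α a κ p ≤ Real.exp (-(a * κ)) * (Real.exp (-1 * |p|) * (1 / ((2 * κ - α) * κ))) := by
  have hκ0 : 0 < κ := lt_trans (by positivity) hκ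
  have h1 := k_le_sqrt' p κ hκ0.le
  have h2 := abs_le_sqrt' p κ
  have hd0 : 0 < (2 * κ - α) * κ := by nlinarith
  have key : F α a κ p ≤ Real.exp (-(a * κ) + -1 * |p|) * (1 / ((2 * κ - α) * κ)) := by
    rw [mul_one_div]
    refine div_le_div₀ (Real.exp_pos _).le (Real.exp_le_exp.2 ?_) hd0 ?_
    · nlinarith [mul_nonneg (zero_le_one.trans ha) (sub_nonneg.2 h1),
        mul_nonneg (zero_le_one.trans ha) (sub_nonneg.2 h2),
        mul_nonneg (sub_nonneg.2 ha) (abs_nonneg p)]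
    · nlinarith [mul_nonneg (sub_nonneg.2 h1) (sub_nonneg.2 h1), h1, hκ, hα]
  calc F α a κ p ≤ Real.exp (-(a * κ) + -1 * |p|) * (1 / ((2 * κ - α) * κ)) := key
    _ = Real.exp (-(a * κ)) * (Real.exp (-1 * |p|) * (1 / ((2 * κ - α) * κ))) := by
        rw [Real.exp_add]; ring

lemma phiA_tendsto {α κ : ℝ} (hα : 0 < α) (hκ : α / 2 < κ) :
    Tendsto (fun a => phiA α a κ) atTop (𝓝 0) := by
  have hκ0 : 0 < κ := lt_trans (by positivity) hκ
  have hI : Integrable (fun p : ℝ => Real.exp (-1 * |p|) * (1 / ((2 * κ - α) * κ))) :=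
    (integrable_exp_neg_mul_abs 1 one_pos).mul_const _
  set I := ∫ p : ℝ, Real.exp (-1 * |p|) * (1 / ((2 * κ - α) * κ)) with hIdef
  have upper : ∀ a : ℝ, 1 ≤ a →
      phiA α a κ ≤ (α / (4 * π)) * (Real.exp (-(a * κ)) * I) := by
    intro a ha
    have hInt : (∫ p : ℝ, F α a κ p) ≤
        ∫ p : ℝ, Real.exp (-(a * κ)) * (Real.exp (-1 * |p|) * (1 / ((2 * κ - α) * κ))) :=
      integral_mono_of_nonneg (Eventually.of_forall (F_nonneg hα hκ))
        (hI.const_mul _) (Eventually.of_forall (F_le2 hα hκ ha))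
    rw [integral_const_mul] at hInt
    rw [phiA_eq]
    exact mul_le_mul_of_nonneg_left hInt (by positivity)
  have h0 : Tendsto (fun a : ℝ => (α / (4 * π)) * (Real.exp (-(a * κ)) * I)) atTop (𝓝 0) := by
    have h1 : Tendsto (fun a : ℝ => -(a * κ)) atTop atBot :=
      tendsto_neg_atBot_iff.2 (Tendsto.atTop_mul_const hκ0 tendsto_id)
    have h2 : Tendsto (fun a : ℝ => Real.exp (-(a * κ))) atTop (𝓝 0) :=
      Real.tendsto_exp_atBot.comp h1
    simpa using ((h2.mul_const I).const_mul (α / (4 * π)))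
  refine tendsto_of_tendsto_of_tendsto_of_le_of_le' tendsto_const_nhds h0 ?_ ?_
  · filter_upwards with a; exact phiA_nonneg hα hκ
  · filter_upwards [Ici_mem_atTop (1:ℝ)] with a ha; exact upper a ha

noncomputable def kst (β : ℝ) : ℝ := 2 * Real.exp (-(2 * π * β + Real.eulerMascheroniConstant))

lemma kst_pos (β : ℝ) : 0 < kst β := by unfold kst; positivity

lemma sBeta_kst (β : ℝ) : sBeta β (kst β) = 0 := by
  unfold sBeta kst
  rw [show (2:ℝ) * Real.exp (-(2 * π * β + Real.eulerMascheroniConstant)) / 2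
      = Real.exp (-(2 * π * β + Real.eulerMascheroniConstant)) by ring, Real.log_exp]
  have hπ := Real.pi_ne_zero
  field_simp
  ring

lemma sBeta_strictMono {β κ₀ κ₁ : ℝ} (h0 : 0 < κ₀) (h01 : κ₀ < κ₁) :
    sBeta β κ₀ < sBeta β κ₁ := by
  unfold sBeta
  have := Real.pi_pos
  have hlog : Real.log (κ₀ / 2) < Real.log (κ₁ / 2) :=
    Real.log_lt_log (by positivity) (by linarith)
  have h2 : (0:ℝ) < 1 / (2 * π) := by positivity
  nlinarith [mul_lt_mul_of_pos_left (add_lt_add_right hlog Real.eulerMascheroniConstant) h2]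

lemma sBeta_mono {β κ₀ κ₁ : ℝ} (h0 : 0 < κ₀) (h01 : κ₀ ≤ κ₁) :
    sBeta β κ₀ ≤ sBeta β κ₁ := by
  rcases eq_or_lt_of_le h01 with rfl | h
  · exact le_rfl
  · exact (sBeta_strictMono h0 h).le

lemma sqrt_eq_kst (β : ℝ) :
    Real.sqrt (-(-4 * Real.exp (-2 * (2 * π * β + Real.eulerMascheroniConstant)))) = kst β := by
  have h : (-(-4 * Real.exp (-2 * (2 * π * β + Real.eulerMascheroniConstant)))) = (kst β) ^ 2 := by
    unfold kst
    rw [show -2 * (2 * π * β + Real.eulerMascheroniConstant)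
        = (-(2 * π * β + Real.eulerMascheroniConstant)) + (-(2 * π * β + Real.eulerMascheroniConstant)) by ring,
      Real.exp_add]
    ring
  rw [h, Real.sqrt_sq (kst_pos β).le]

theorem stmt7 (α β : ℝ) (hα : 0 < α) (κ_ : ℝ → ℝ)
    (hκ : ∀ a : ℝ, 0 < a →
      κ_ a ∈ Set.Ioi (α / 2) ∧ sBeta β (κ_ a) = phiA α a (κ_ a) ∧
      ∀ κ' ∈ Set.Ioi (α / 2), sBeta β κ' = phiA α a κ' → κ' = κ_ a) :
    (α / 2 < Real.sqrt (-(-4 * Real.exp (-2 * (2 * π * β + Real.eulerMascheroniConstant)))) →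
      Tendsto κ_ atTop
        (𝓝 (Real.sqrt (-(-4 * Real.exp (-2 * (2 * π * β + Real.eulerMascheroniConstant))))))) ∧
    (Real.sqrt (-(-4 * Real.exp (-2 * (2 * π * β + Real.eulerMascheroniConstant)))) ≤ α / 2 →
      Tendsto κ_ atTop (𝓝 (α / 2))) := by
  rw [sqrt_eq_kst β]
  have main : Tendsto κ_ atTop (𝓝 (max (kst β) (α / 2))) := by
    rw [tendsto_order]
    constructor
    · intro l hl
      filter_upwards [Ioi_mem_atTop (0:ℝ)] with a ha
      have h := hκ a ha
      have hlow : max (kst β) (α / 2) ≤ κ_ a := by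
        refine max_le ?_ (le_of_lt h.1)
        by_contra hcon
        push_neg at hcon
        have hκa0 : 0 < κ_ a := lt_trans (by positivity) h.1
        have h1 : sBeta β (κ_ a) < sBeta β (kst β) := sBeta_strictMono hκa0 hcon
        rw [sBeta_kst] at h1
        have h2 : 0 ≤ phiA α a (κ_ a) := phiA_nonneg hα h.1
        rw [← h.2.1] at h2
        linarith
      exact lt_of_lt_of_le hl hlow
    · intro u hu
      have hu1 : α / 2 < u := lt_of_le_of_lt (le_max_right _ _) hu
      have hu2 : kst β < u := lt_of_le_of_lt (le_max_left _ _) hu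
      have hδ : 0 < sBeta β u := by
        have h := sBeta_strictMono (β := β) (kst_pos β) hu2
        rwa [sBeta_kst] at h
      have hph : ∀ᶠ a in atTop, phiA α a u < sBeta β u :=
        (phiA_tendsto hα hu1).eventually_lt_const hδ
      filter_upwards [hph, Ioi_mem_atTop (0:ℝ)] with a hpa ha
      have h := hκ a ha
      by_contra hcon
      push_neg at hcon
      have h1 : sBeta β u ≤ sBeta β (κ_ a) :=
        sBeta_mono (lt_trans (by positivity) hu1) hcon
      have h2 : phiA α a (κ_ a) ≤ phiA α a u := phiA_anti hα ha hu1 hcon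
      rw [h.2.1] at h1
      linarith
  constructor
  · intro hc
    rwa [max_eq_left hc.le] at main
  · intro hc
    rwa [max_eq_right hc] at main
end

section
/- For any α > 0, β ∈ ℝ, and a > 0, the equation š_β(κ) − K₀(2κa) − 2φ_a(κ) = 0 has exactly one solution in (α/2, ∞). -/
/-!
On `(α/2, ∞)` the function `κ ↦ š_β(κ) - K₀(2κa) - 2φ_a(κ)` is continuous and strictly
increasing, because `š_β` increases while `K₀` and `φ_a` decrease. It tends to `+∞` at infinity,
since `š_β` grows like `log κ` and the other two terms stay bounded, and to `-∞` as `κ → α/2⁺`: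
for `p ∈ [0, 1]` the integrand of `φ_a` is at least a constant times `1 / (2p + 2κ - α)`, whose
integral over `[0, 1]` is of order `-log (2κ - α)`. The intermediate value theorem gives a zero,
and strict monotonicity makes it unique.
-/

open Real MeasureTheory Set Filter Topology

theorem existsUnique_eq_of_injOn_Ioi {α β : Type*} [ConditionallyCompleteLinearOrder α]
    [TopologicalSpace α] [OrderTopology α] [DenselyOrdered α] [NoMaxOrder α]
    [LinearOrder β] [TopologicalSpace β] [OrderClosedTopology β]
    {f : α → β} {c : α} (hinj : InjOn f (Ioi c)) (hcont : ContinuousOn f (Ioi c))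
    (hbot : Tendsto f (𝓝[>] c) atBot) (htop : Tendsto f atTop atTop) (y : β) :
    ∃! x, x ∈ Ioi c ∧ f x = y := by
  obtain ⟨x₁, hfx₁, hx₁⟩ :=
    ((hbot.eventually (eventually_le_atBot y)).and self_mem_nhdsWithin).exists
  obtain ⟨x₂, hfx₂, hx₂⟩ :=
    ((htop.eventually (eventually_ge_atTop y)).and (eventually_gt_atTop c)).exists
  obtain ⟨x, hx, hfx⟩ := isPreconnected_Ioi.intermediate_value hx₁ hx₂ hcont ⟨hfx₁, hfx₂⟩
  exact ⟨x, ⟨hx, hfx⟩, fun z ⟨hz, hfz⟩ => hinj hz hx (hfz.trans hfx.symm)⟩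

theorem strictMonoOn_sBeta (β : ℝ) : StrictMonoOn (sBeta β) (Ioi 0) := by
  intro x (hx : 0 < x) y _ hxy
  unfold sBeta
  gcongr

theorem continuousAt_sBeta (β : ℝ) {κ : ℝ} (hκ : κ ≠ 0) : ContinuousAt (sBeta β) κ := by
  unfold sBeta
  fun_prop (disch := positivity)

theorem tendsto_sBeta_atTop (β : ℝ) : Tendsto (sBeta β) atTop atTop := by
  have hlog : Tendsto (fun κ : ℝ => log (κ / 2)) atTop atTop :=
    tendsto_log_atTop.comp (tendsto_id.atTop_div_const two_pos)
  exact tendsto_atTop_add_const_left _ β <|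
    (tendsto_atTop_add_const_right _ _ hlog).const_mul_atTop (by positivity)

theorem integrableOn_exp_neg_mul_cosh {x : ℝ} (hx : 0 < x) :
    IntegrableOn (fun t => exp (-x * cosh t)) (Ioi 0) := by
  refine (exp_neg_integrableOn_Ioi 0 hx).mono' (by fun_prop) ?_
  filter_upwards [ae_restrict_mem measurableSet_Ioi] with t (ht : 0 < t)
  rw [norm_of_nonneg (exp_pos _).le, exp_le_exp]
  have : t ≤ cosh t := ((self_lt_sinh_iff.2 ht).trans (sinh_lt_cosh t)).le
  nlinarith

theorem besselK0_antitoneOn : AntitoneOn besselK0 (Ioi 0) := by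
  intro x (hx : 0 < x) y (hy : 0 < y) hxy
  refine setIntegral_mono_on (integrableOn_exp_neg_mul_cosh hy)
    (integrableOn_exp_neg_mul_cosh hx) measurableSet_Ioi fun t _ => exp_le_exp.2 ?_
  nlinarith [cosh_pos t]

theorem continuousAt_besselK0 {x₀ : ℝ} (hx₀ : 0 < x₀) : ContinuousAt besselK0 x₀ := by
  refine continuousAt_of_dominated (F := fun x t => exp (-x * cosh t))
    (bound := fun t => exp (-(x₀ / 2) * cosh t)) (.of_forall fun x => by fun_prop) ?_
    (integrableOn_exp_neg_mul_cosh (half_pos hx₀)) (.of_forall fun t => by fun_prop)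
  filter_upwards [eventually_gt_nhds (half_lt_self hx₀)] with x hx
  refine .of_forall fun t => ?_
  rw [norm_of_nonneg (exp_pos _).le, exp_le_exp]
  nlinarith [cosh_pos t]

theorem integral_inv_two_mul_add {c : ℝ} (hc : 0 < c) :
    ∫ p in (0 : ℝ)..1, (2 * p + c)⁻¹ = log ((2 + c) / c) / 2 := by
  rw [intervalIntegral.integral_comp_mul_add (fun x => x⁻¹) two_ne_zero c,
    integral_inv_of_pos (by linarith) (by linarith)]
  simp only [mul_zero, zero_add, mul_one, smul_eq_mul]
  ring

theorem le_sqrt_sq_add_sq (κ p : ℝ) : κ ≤ √(p ^ 2 + κ ^ 2) :=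
  le_sqrt_of_sq_le (by nlinarith)

noncomputable def phiKernel (α a s : ℝ) : ℝ := exp (-2 * a * s) / ((2 * s - α) * s)

theorem phiA_eq_integral_phiKernel (α a κ : ℝ) :
    phiA α a κ = α / (4 * π) * ∫ p : ℝ, phiKernel α a √(p ^ 2 + κ ^ 2) := rfl

section PhiA

variable {α a : ℝ}

theorem phiKernel_denom_pos (hα : 0 ≤ α) {s : ℝ} (hs : α / 2 < s) : 0 < (2 * s - α) * s := by
  have : 0 < s := by linarith
  have : 0 < 2 * s - α := by linarith
  positivity

theorem phiKernel_pos (hα : 0 ≤ α) {s : ℝ} (hs : α / 2 < s) : 0 < phiKernel α a s :=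
  div_pos (exp_pos _) (phiKernel_denom_pos hα hs)

theorem phiKernel_antitoneOn (hα : 0 ≤ α) (ha : 0 ≤ a) :
    AntitoneOn (phiKernel α a) (Ioi (α / 2)) := by
  intro s (hs : α / 2 < s) t (ht : α / 2 < t) hst
  exact div_le_div₀ (exp_pos _).le (exp_le_exp.2 (by nlinarith)) (phiKernel_denom_pos hα hs)
    (by nlinarith)

theorem continuousOn_phiKernel (hα : 0 ≤ α) : ContinuousOn (phiKernel α a) (Ioi (α / 2)) := by
  refine ContinuousOn.div (by fun_prop) (by fun_prop) fun s hs => ?_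
  exact (phiKernel_denom_pos hα hs).ne'

theorem lt_sqrt_sq_add_sq {κ : ℝ} (hκ : α / 2 < κ) (p : ℝ) :
    α / 2 < √(p ^ 2 + κ ^ 2) :=
  hκ.trans_le (le_sqrt_sq_add_sq κ p)

-- `(2s - α) s ≥ (2κ - α) s² / κ` because `s = √(p² + κ²) ≥ κ`.
theorem phiKernel_le (hα : 0 ≤ α) (ha : 0 ≤ a) {κ : ℝ} (hκ : α / 2 < κ) (p : ℝ) :
    phiKernel α a √(p ^ 2 + κ ^ 2) ≤ ((2 * κ - α) * κ)⁻¹ * (1 + (p / κ) ^ 2)⁻¹ := by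
  have hκ0 : 0 < κ := by linarith
  set s := √(p ^ 2 + κ ^ 2)
  have hκs : κ ≤ s := le_sqrt_sq_add_sq κ p
  have hs2 : s ^ 2 = p ^ 2 + κ ^ 2 := sq_sqrt (by positivity)
  have hden : (2 * κ - α) * κ * (1 + (p / κ) ^ 2) ≤ (2 * s - α) * s := by
    have h : (2 * κ - α) * κ * (1 + (p / κ) ^ 2) = (2 * κ - α) * s ^ 2 / κ := by
      rw [hs2]; field_simp; ring
    rw [h, div_le_iff₀ hκ0]
    nlinarith [mul_nonneg (mul_nonneg hα (hκ0.le.trans hκs)) (sub_nonneg.2 hκs)]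
  have hnum : exp (-2 * a * s) ≤ 1 := exp_le_one_iff.2 (by nlinarith)
  rw [← mul_inv, phiKernel, ← one_div]
  have : 0 < 2 * κ - α := by linarith
  exact div_le_div₀ zero_le_one hnum (by positivity) hden

theorem continuous_phiKernel_sqrt (hα : 0 ≤ α) {κ : ℝ} (hκ : α / 2 < κ) :
    Continuous fun p => phiKernel α a √(p ^ 2 + κ ^ 2) :=
  (continuousOn_phiKernel hα).comp_continuous (by fun_prop) (lt_sqrt_sq_add_sq hκ)

theorem integrable_phiKernel_sqrt (hα : 0 ≤ α) (ha : 0 ≤ a) {κ : ℝ} (hκ : α / 2 < κ) :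
    Integrable fun p => phiKernel α a √(p ^ 2 + κ ^ 2) := by
  have hκ0 : κ ≠ 0 := by linarith
  refine ((integrable_inv_one_add_sq.comp_div hκ0).const_mul ((2 * κ - α) * κ)⁻¹).mono'
    (continuous_phiKernel_sqrt hα hκ).aestronglyMeasurable (Eventually.of_forall fun p => ?_)
  rw [norm_of_nonneg (phiKernel_pos hα (lt_sqrt_sq_add_sq hκ p)).le]
  exact phiKernel_le hα ha hκ p

theorem phiKernel_sqrt_le_of_le (hα : 0 ≤ α) (ha : 0 ≤ a) {κ₁ κ₂ : ℝ} (hκ₁ : α / 2 < κ₁)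
    (h : κ₁ ≤ κ₂) (p : ℝ) :
    phiKernel α a √(p ^ 2 + κ₂ ^ 2) ≤ phiKernel α a √(p ^ 2 + κ₁ ^ 2) :=
  phiKernel_antitoneOn hα ha (lt_sqrt_sq_add_sq hκ₁ p) (lt_sqrt_sq_add_sq (hκ₁.trans_le h) p)
    (by have : 0 ≤ κ₁ := by linarith
        gcongr)

theorem phiA_antitoneOn (hα : 0 ≤ α) (ha : 0 ≤ a) : AntitoneOn (phiA α a) (Ioi (α / 2)) := by
  intro κ₁ hκ₁ κ₂ hκ₂ h
  rw [phiA_eq_integral_phiKernel, phiA_eq_integral_phiKernel]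
  refine mul_le_mul_of_nonneg_left ?_ (by positivity)
  exact integral_mono (integrable_phiKernel_sqrt hα ha hκ₂) (integrable_phiKernel_sqrt hα ha hκ₁)
    (phiKernel_sqrt_le_of_le hα ha hκ₁ h)

theorem continuousAt_phiA (hα : 0 ≤ α) (ha : 0 ≤ a) {κ₀ : ℝ} (hκ₀ : α / 2 < κ₀) :
    ContinuousAt (phiA α a) κ₀ := by
  obtain ⟨m, hm, hmκ₀⟩ := exists_between hκ₀
  refine continuousAt_const.mul (continuousAt_of_dominated
    (F := fun κ p => phiKernel α a √(p ^ 2 + κ ^ 2))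
    (bound := fun p => phiKernel α a √(p ^ 2 + m ^ 2)) ?_ ?_
    (integrable_phiKernel_sqrt hα ha hm) (Eventually.of_forall fun p => ?_))
  · filter_upwards [eventually_gt_nhds (hm.trans hmκ₀)] with κ hκ
    exact (continuous_phiKernel_sqrt hα hκ).aestronglyMeasurable
  · filter_upwards [eventually_gt_nhds hmκ₀] with κ hκ
    refine Eventually.of_forall fun p => ?_
    rw [norm_of_nonneg (phiKernel_pos hα (lt_sqrt_sq_add_sq (hm.trans hκ) p)).le]
    exact phiKernel_sqrt_le_of_le hα ha hm hκ.le p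
  · exact ContinuousAt.comp (g := phiKernel α a)
      ((continuousOn_phiKernel hα).continuousAt (Ioi_mem_nhds (lt_sqrt_sq_add_sq hκ₀ p)))
      (by fun_prop)

theorem le_phiKernel_sqrt_of_mem_Icc (hα : 0 ≤ α) (ha : 0 ≤ a) {κ p : ℝ}
    (hκ : κ ∈ Ioc (α / 2) (α / 2 + 1)) (hp : p ∈ Icc (0 : ℝ) 1) :
    exp (-2 * a * (α / 2 + 2)) / (α / 2 + 2) * (2 * p + (2 * κ - α))⁻¹ ≤
      phiKernel α a √(p ^ 2 + κ ^ 2) := by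
  obtain ⟨hκ₁, hκ₂⟩ := hκ
  obtain ⟨hp₀, hp₁⟩ := hp
  have hsqrt : √(p ^ 2 + κ ^ 2) ≤ p + κ := sqrt_le_iff.2 ⟨by linarith, by nlinarith⟩
  refine le_trans ?_ (phiKernel_antitoneOn hα ha (lt_sqrt_sq_add_sq hκ₁ p)
    (show α / 2 < p + κ by linarith) hsqrt)
  calc exp (-2 * a * (α / 2 + 2)) / (α / 2 + 2) * (2 * p + (2 * κ - α))⁻¹
      = exp (-2 * a * (α / 2 + 2)) / ((2 * (p + κ) - α) * (α / 2 + 2)) := by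
        rw [mul_comm (2 * (p + κ) - α), ← div_div]; ring
    _ ≤ phiKernel α a (p + κ) :=
      div_le_div₀ (exp_pos _).le (exp_le_exp.2 (by nlinarith))
        (phiKernel_denom_pos hα (by linarith)) (by nlinarith)

theorem exists_pos_mul_neg_log_le_phiA (hα : 0 < α) (ha : 0 ≤ a) :
    ∃ C > 0, ∀ κ ∈ Ioc (α / 2) (α / 2 + 1), C * -log (2 * κ - α) ≤ phiA α a κ := by
  set E := exp (-2 * a * (α / 2 + 2)) / (α / 2 + 2)
  refine ⟨α / (4 * π) * (E / 2), by positivity, fun κ hκ => ?_⟩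
  have hc : 0 < 2 * κ - α := by linarith [hκ.1]
  have hkernel := integrable_phiKernel_sqrt hα.le ha hκ.1
  have hlog : -log (2 * κ - α) ≤ log ((2 + (2 * κ - α)) / (2 * κ - α)) := by
    rw [log_div (by linarith) hc.ne']
    linarith [log_nonneg (by linarith : (1 : ℝ) ≤ 2 + (2 * κ - α))]
  have hint : E * (log ((2 + (2 * κ - α)) / (2 * κ - α)) / 2) ≤
      ∫ p, phiKernel α a √(p ^ 2 + κ ^ 2) :=
    calc E * (log ((2 + (2 * κ - α)) / (2 * κ - α)) / 2)
        = ∫ p in (0 : ℝ)..1, E * (2 * p + (2 * κ - α))⁻¹ := by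
          rw [intervalIntegral.integral_const_mul, integral_inv_two_mul_add hc]
      _ ≤ ∫ p in (0 : ℝ)..1, phiKernel α a √(p ^ 2 + κ ^ 2) := by
          refine intervalIntegral.integral_mono_on zero_le_one ?_ hkernel.intervalIntegrable
            fun p hp => le_phiKernel_sqrt_of_mem_Icc hα.le ha hκ hp
          refine (continuousOn_const.mul (ContinuousOn.inv₀ (by fun_prop) fun p hp => ?_))
            |>.intervalIntegrable
          rw [uIcc_of_le zero_le_one] at hp
          linarith [hp.1]
      _ ≤ ∫ p, phiKernel α a √(p ^ 2 + κ ^ 2) := by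
          rw [intervalIntegral.integral_of_le zero_le_one]
          exact setIntegral_le_integral hkernel (Eventually.of_forall fun p =>
            (phiKernel_pos hα.le (lt_sqrt_sq_add_sq hκ.1 p)).le)
  rw [phiA_eq_integral_phiKernel, mul_assoc]
  gcongr
  calc E / 2 * -log (2 * κ - α) ≤ E / 2 * log ((2 + (2 * κ - α)) / (2 * κ - α)) := by gcongr
    _ = E * (log ((2 + (2 * κ - α)) / (2 * κ - α)) / 2) := by ring
    _ ≤ _ := hint

theorem tendsto_phiA_nhdsGT (hα : 0 < α) (ha : 0 ≤ a) :
    Tendsto (phiA α a) (𝓝[>] (α / 2)) atTop := by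
  obtain ⟨C, hC, hle⟩ := exists_pos_mul_neg_log_le_phiA hα ha
  have hlin : Tendsto (fun κ => 2 * κ - α) (𝓝[>] (α / 2)) (𝓝[>] 0) := by
    refine tendsto_nhdsWithin_of_tendsto_nhds_of_eventually_within _ ?_ ?_
    · exact tendsto_nhdsWithin_of_tendsto_nhds
        ((by fun_prop : Continuous fun κ : ℝ => 2 * κ - α).tendsto' _ _ (by ring))
    · exact eventually_nhdsWithin_of_forall fun κ (hκ : α / 2 < κ) =>
        show 0 < 2 * κ - α by linarith
  refine tendsto_atTop_mono' _ ?_ ((tendsto_neg_atBot_atTop.comp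
    (tendsto_log_nhdsGT_zero.comp hlin)).const_mul_atTop hC)
  filter_upwards [Ioc_mem_nhdsGT (by linarith : α / 2 < α / 2 + 1)] with κ hκ
  exact hle κ hκ

end PhiA

noncomputable def spectralFunction (α β a κ : ℝ) : ℝ :=
  sBeta β κ - besselK0 (2 * κ * a) - 2 * phiA α a κ

section SpectralFunction

variable {α a : ℝ} (β : ℝ)

theorem strictMonoOn_spectralFunction (hα : 0 < α) (ha : 0 < a) :
    StrictMonoOn (spectralFunction α β a) (Ioi (α / 2)) := by
  intro x (hx : α / 2 < x) y (hy : α / 2 < y) hxy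
  have hx₀ : 0 < x := by linarith
  have hsBeta := strictMonoOn_sBeta β hx₀ (hx₀.trans hxy) hxy
  have hK₀ := besselK0_antitoneOn (show 0 < 2 * x * a by positivity)
    (show 0 < 2 * y * a by nlinarith) (by gcongr)
  have hphi := phiA_antitoneOn hα.le ha.le hx hy hxy.le
  unfold spectralFunction
  linarith

theorem continuousAt_sBeta_sub_besselK0 (ha : 0 < a) {κ : ℝ} (hκ : 0 < κ) :
    ContinuousAt (fun κ => sBeta β κ - besselK0 (2 * κ * a)) κ :=
  (continuousAt_sBeta β hκ.ne').sub <|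
    ContinuousAt.comp (g := besselK0) (continuousAt_besselK0 (by positivity)) (by fun_prop)

theorem continuousOn_spectralFunction (hα : 0 < α) (ha : 0 < a) :
    ContinuousOn (spectralFunction α β a) (Ioi (α / 2)) := fun κ (hκ : α / 2 < κ) =>
  ((continuousAt_sBeta_sub_besselK0 β ha (by linarith)).sub
    (continuousAt_const.mul (continuousAt_phiA hα.le ha.le hκ))).continuousWithinAt

theorem tendsto_spectralFunction_nhdsGT (hα : 0 < α) (ha : 0 < a) :
    Tendsto (spectralFunction α β a) (𝓝[>] (α / 2)) atBot := by
  have hfinite := (continuousAt_sBeta_sub_besselK0 β ha (half_pos hα)).tendsto.mono_left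
    (nhdsWithin_le_nhds (s := Ioi (α / 2)))
  have hphi := (tendsto_phiA_nhdsGT hα ha.le).const_mul_atTop_of_neg (by norm_num : (-2 : ℝ) < 0)
  refine (hfinite.add_atBot hphi).congr fun κ => ?_
  simp only [spectralFunction]
  ring

theorem tendsto_spectralFunction_atTop (hα : 0 < α) (ha : 0 < a) :
    Tendsto (spectralFunction α β a) atTop atTop := by
  set κ₀ := α / 2 + 1
  have hκ₀ : α / 2 < κ₀ := lt_add_one _
  refine tendsto_atTop_mono' _ ?_ (tendsto_atTop_add_const_right _
    (-(besselK0 (2 * κ₀ * a) + 2 * phiA α a κ₀)) (tendsto_sBeta_atTop β))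
  filter_upwards [eventually_ge_atTop κ₀] with κ hκ
  have hK₀ := besselK0_antitoneOn (show 0 < 2 * κ₀ * a by positivity)
    (show 0 < 2 * κ * a by nlinarith) (by gcongr)
  have hphi := phiA_antitoneOn hα.le ha.le hκ₀ (hκ₀.trans_le hκ) hκ
  unfold spectralFunction
  linarith

end SpectralFunction

theorem stmt13 (α β a : ℝ) (hα : 0 < α) (ha : 0 < a) :
    ∃! κ : ℝ, κ ∈ Set.Ioi (α / 2) ∧
      sBeta β κ - besselK0 (2 * κ * a) - 2 * phiA α a κ = 0 :=
  existsUnique_eq_of_injOn_Ioi (strictMonoOn_spectralFunction β hα ha).injOn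
    (continuousOn_spectralFunction β hα ha) (tendsto_spectralFunction_nhdsGT β hα ha)
    (tendsto_spectralFunction_atTop β hα ha) 0
end
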